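/- Let K be a field and q ∈ K an element that is not a root of unity. Then the quantized Weyl algebra C(q) does not satisfy property (⋄): there exists a finitely generated monolithic left C(q)-module that is not Artinian. -/

import Mathlib

noncomputable section

open FreeAlgebra

/-- Defining relation of the quantized Weyl algebra `C(q)`: `a * b = q • (b * a) + 1`,
where `ι K 0` plays the role of `a` and `ι K 1` plays the role of `b`. -/
inductive QuantizedWeylRel (K : Type) [Field K] (q : K) :
    FreeAlgebra K (Fin 2) → FreeAlgebra K (Fin 2) → Prop
  | rel : QuantizedWeylRel K q (ι K (0 : Fin 2) * ι K (1 : Fin 2))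
      (q • (ι K (1 : Fin 2) * ι K (0 : Fin 2)) + 1)

/-- The quantized Weyl algebra `C(q)`. -/
abbrev QuantizedWeyl (K : Type) [Field K] (q : K) : Type :=
  RingQuot (QuantizedWeylRel K q)

/-- The generator `a` of the quantized Weyl algebra. -/
def QuantizedWeyl.a (K : Type) [Field K] (q : K) : QuantizedWeyl K q :=
  RingQuot.mkAlgHom K (QuantizedWeylRel K q) (ι K (0 : Fin 2))

/-- The generator `b` of the quantized Weyl algebra. -/
def QuantizedWeyl.b (K : Type) [Field K] (q : K) : QuantizedWeyl K q :=
  RingQuot.mkAlgHom K (QuantizedWeylRel K q) (ι K (1 : Fin 2))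

/-- A witness to the failure of property `(⋄)` for the ring `B`: a finitely generated
left `B`-module that is monolithic — it has a simple submodule which is essential,
i.e., meets every nonzero submodule nontrivially — but is not Artinian. -/
structure FGMonolithicNonArtinianModule (B : Type) [Ring B] where
  /-- The underlying module. -/
  M : Type
  /-- `M` is an abelian group. -/
  [isAddCommGroup : AddCommGroup M]
  /-- `M` is a left `B`-module. -/
  [isModule : Module B M]
  /-- `M` is finitely generated. -/
  fg : Module.Finite B M
  /-- The monolith: a submodule of `M`. -/
  monolith : Submodule B M
  /-- The monolith is a simple module. -/
  monolith_simple : IsSimpleModule B monolith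
  /-- The monolith is essential in `M`. -/
  monolith_essential : ∀ N : Submodule B M, N ≠ ⊥ → N ⊓ monolith ≠ ⊥
  /-- `M` is not Artinian. -/
  not_artinian : ¬ IsArtinian B M

attribute [instance] FGMonolithicNonArtinianModule.isAddCommGroup
  FGMonolithicNonArtinianModule.isModule

/-!
Write `K[x]` and `K[y]` for two copies of `ℕ →₀ K` and let `C(q)` act on `K[x] × K[y]`.
On `K[x]`, `a` is the `q`-derivative and `b` is multiplication by `x`; since `a` lowers degrees
with nonzero factors `[n]_q` and `b` raises them, `K[x]` is a simple submodule. On the quotient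
`K[y]`, `b` is diagonal with pairwise distinct eigenvalues `((1 - q) q ^ j)⁻¹` and `a` sends
`y ^ j` to `q ^ j y ^ j + y ^ (j + 1)`, so the preimages of the spans of `{y ^ j | j ≥ k}` form a
strictly descending chain. The two pieces are glued by giving `b (0, c)` the extra constant term
`τ c` in `K[x]`, where the functional `τ` kills the image of `a` on `K[y]` and no monomial.
Every nonzero submodule meets `K[x]`: applying `b - λ`, for an eigenvalue `λ` occurring in the
`K[y]`-part, removes one eigencomponent, and never gives `0`, because an eigenvector `(s, c)`
of `b` with `c ≠ 0` would have `c` a monomial, so `(x - λ) s = -τ c ≠ 0`, which is impossible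
in `K[x]` for degree reasons.
-/

namespace Submodule

variable {R A M : Type*} [CommSemiring R] [Semiring A] [Algebra R A] [AddCommMonoid M]
  [Module R M] [Module A M]

def ofAdjoinEqTop [IsScalarTower R A M] {s : Set A} (hs : Algebra.adjoin R s = ⊤)
    (N : Submodule R M) (hN : ∀ x ∈ s, ∀ v ∈ N, x • v ∈ N) : Submodule A M where
  toAddSubmonoid := N.toAddSubmonoid
  smul_mem' x v hv := by
    change x • v ∈ N
    have hx : x ∈ Algebra.adjoin R s := hs ▸ Algebra.mem_top
    induction hx using Algebra.adjoin_induction generalizing v with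
    | mem x hx => exact hN x hx v hv
    | algebraMap r => simpa only [algebraMap_smul] using N.smul_mem r hv
    | add x y _ _ hx hy => simpa only [add_smul] using N.add_mem (hx v hv) (hy v hv)
    | mul x y _ _ hx hy => simpa only [mul_smul] using hx _ (hy v hv)

@[simp]
theorem mem_ofAdjoinEqTop [IsScalarTower R A M] {s : Set A} {hs : Algebra.adjoin R s = ⊤}
    {N : Submodule R M} {hN : ∀ x ∈ s, ∀ v ∈ N, x • v ∈ N} {v : M} :
    v ∈ ofAdjoinEqTop hs N hN ↔ v ∈ N :=
  Iff.rfl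

end Submodule

theorem pow_injective_of_not_isOfFinOrder {G₀ : Type*} [GroupWithZero G₀] {x : G₀}
    (hx0 : x ≠ 0) (hx : ¬IsOfFinOrder x) : Function.Injective (x ^ · : ℕ → G₀) := by
  have hu : ¬IsOfFinOrder (Units.mk0 x hx0) := by rwa [← Units.isOfFinOrder_val]
  exact fun i j h ↦ injective_pow_iff_not_isOfFinOrder.2 hu (Units.ext (by simpa using h))

theorem Finsupp.apply_mem_of_forall_single_one_mem {R M α : Type*} [Semiring R]
    [AddCommMonoid M] [Module R M] (f : (α →₀ R) →ₗ[R] M) {N : Submodule R M}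
    (h : ∀ i, f (single i 1) ∈ N) (s : α →₀ R) : f s ∈ N := by
  induction s using Finsupp.induction_linear with
  | zero => simp
  | add s t hs ht => simpa using N.add_mem hs ht
  | single i x =>
    rw [← smul_single_one, map_smul]
    exact N.smul_mem x (h i)

namespace QuantizedWeyl

section Presentation

variable {K : Type} [Field K] {q : K}

theorem adjoin_a_b : Algebra.adjoin K {a K q, b K q} = ⊤ := by
  have : {a K q, b K q} = RingQuot.mkAlgHom K (QuantizedWeylRel K q) '' Set.range (ι K) := by
    rw [← Set.range_comp]; ext; simp [Fin.exists_fin_two, a, b, eq_comm]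
  rw [this, Algebra.adjoin_image, FreeAlgebra.adjoin_range_ι, Algebra.map_top,
    AlgHom.range_eq_top]
  exact RingQuot.mkAlgHom_surjective K _

def lift {A : Type*} [Semiring A] [Algebra K A] (x y : A) (h : x * y = q • (y * x) + 1) :
    QuantizedWeyl K q →ₐ[K] A :=
  RingQuot.liftAlgHom K ⟨FreeAlgebra.lift K ![x, y], by rintro _ _ ⟨⟩; simpa using h⟩

variable {A : Type*} [Semiring A] [Algebra K A] {x y : A} {h : x * y = q • (y * x) + 1}

@[simp]
theorem lift_a : lift x y h (a K q) = x := by simp [lift, a]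

@[simp]
theorem lift_b : lift x y h (b K q) = y := by simp [lift, b]

end Presentation

open Finsupp

section Operators

variable {R : Type*} [CommSemiring R]

def shift : (ℕ →₀ R) →ₗ[R] ℕ →₀ R := lmapDomain R R Nat.succ

@[simp]
theorem shift_apply_zero (s : ℕ →₀ R) : shift s 0 = 0 :=
  mapDomain_of_notMem_range s 0 (by simp)

@[simp]
theorem shift_apply_succ (s : ℕ →₀ R) (n : ℕ) : shift s (n + 1) = s n :=
  mapDomain_apply Nat.succ_injective s n

@[simp]
theorem shift_single (i : ℕ) (x : R) : shift (single i x) = single (i + 1) x :=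
  mapDomain_single

theorem shift_add_single_ne_smul {x : R} (hx : x ≠ 0) (s : ℕ →₀ R) (μ : R) :
    shift s + single 0 x ≠ μ • s := by
  intro h
  rcases eq_or_ne s 0 with rfl | hs
  · exact hx (by simpa using h)
  have hne := support_nonempty_iff.2 hs
  set d := s.support.max' hne
  have hd : s d ≠ 0 := mem_support_iff.1 (s.support.max'_mem hne)
  have hd1 : s (d + 1) = 0 :=
    notMem_support_iff.1 fun h ↦ (s.support.le_max' _ h).not_gt d.lt_succ_self
  simpa [hd1, hd] using DFunLike.congr_fun h (d + 1)

def diag (w : ℕ → R) : (ℕ →₀ R) →ₗ[R] ℕ →₀ R := DistribSMul.toLinearMap R _ w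

@[simp]
theorem diag_apply (w : ℕ → R) (s : ℕ →₀ R) (n : ℕ) : diag w s n = w n * s n := rfl

@[simp]
theorem diag_single (w : ℕ → R) (i : ℕ) (x : R) :
    diag w (single i x) = single i (w i * x) := by
  ext n; by_cases h : i = n <;> simp [h]

def qInt (q : R) (n : ℕ) : R := ∑ i ∈ Finset.range n, q ^ i

@[simp]
theorem qInt_zero (q : R) : qInt q 0 = 0 := rfl

theorem qInt_succ (q : R) (n : ℕ) : qInt q (n + 1) = q * qInt q n + 1 := geom_sum_succ

def qDeriv (q : R) : (ℕ →₀ R) →ₗ[R] ℕ →₀ R :=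
  lcomapDomain Nat.succ Nat.succ_injective ∘ₗ diag (qInt q)

@[simp]
theorem qDeriv_apply (q : R) (s : ℕ →₀ R) (n : ℕ) :
    qDeriv q s n = qInt q (n + 1) * s (n + 1) :=
  rfl

theorem qDeriv_shift (q : R) (s : ℕ →₀ R) :
    qDeriv q (shift s) = q • shift (qDeriv q s) + s := by
  ext (_ | n) <;>
    simp only [qDeriv_apply, qInt_succ, qInt_zero, shift_apply_zero, shift_apply_succ, coe_add,
      coe_smul, Pi.add_apply, Pi.smul_apply, smul_eq_mul, zero_add, mul_zero, one_mul]
  ring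

theorem qDeriv_single_zero (q : R) (x : R) : qDeriv q (single 0 x) = 0 := by
  ext n; simp

end Operators

variable {K : Type} [Field K] {q : K}

theorem qInt_ne_zero (hq : ¬IsOfFinOrder q) {n : ℕ} (hn : 0 < n) : qInt q n ≠ 0 := by
  intro h
  have := geom_sum_mul q n
  rw [← qInt, h, zero_mul, eq_comm, sub_eq_zero] at this
  exact hq (isOfFinOrder_iff_pow_eq_one.2 ⟨n, hn, this⟩)

theorem eq_single_zero_of_qDeriv_eq_zero (hq : ¬IsOfFinOrder q) {s : ℕ →₀ K}
    (h : qDeriv q s = 0) : s = single 0 (s 0) := by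
  ext (_ | n)
  · simp
  · simpa [qInt_ne_zero hq n.succ_pos] using DFunLike.congr_fun h n

variable (q) in
def quotA : (ℕ →₀ K) →ₗ[K] ℕ →₀ K := diag (q ^ ·) + shift

/-- Given `quotA`, the relation `ab - qba = 1` on `y ^ j` forces these eigenvalues. -/
def quotB (q : K) : (ℕ →₀ K) →ₗ[K] ℕ →₀ K := diag fun j ↦ ((1 - q) * q ^ j)⁻¹

theorem quotA_quotB (hq0 : q ≠ 0) (hq1 : q ≠ 1) (c : ℕ →₀ K) :
    quotA q (quotB q c) = q • quotB q (quotA q c) + c := by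
  have h1q : 1 - q ≠ 0 := sub_ne_zero.2 hq1.symm
  ext (_ | n) <;>
    simp only [quotA, quotB, LinearMap.add_apply, diag_apply, shift_apply_zero, shift_apply_succ,
      map_add, smul_add, coe_add, coe_smul, Pi.add_apply, Pi.smul_apply, smul_eq_mul, pow_zero,
      mul_one, add_zero, mul_zero] <;>
    field_simp <;> ring

theorem eq_single_of_quotB_eq_smul (hq0 : q ≠ 0) (hq : ¬IsOfFinOrder q) {c : ℕ →₀ K} {μ : K}
    (h : quotB q c = μ • c) {j : ℕ} (hj : c j ≠ 0) : c = single j (c j) := by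
  have h1q : 1 - q ≠ 0 := sub_ne_zero.2 fun h ↦ hq (h ▸ IsOfFinOrder.one)
  have hc (i : ℕ) : ((1 - q) * q ^ i)⁻¹ * c i = μ * c i := by
    simpa [quotB] using DFunLike.congr_fun h i
  ext i
  rcases eq_or_ne i j with rfl | hij
  · simp
  · rw [single_eq_of_ne hij]
    by_contra hi
    have := (mul_right_cancel₀ hi (hc i)).trans (mul_right_cancel₀ hj (hc j)).symm
    exact hij (pow_injective_of_not_isOfFinOrder hq0 hq
      (mul_left_cancel₀ h1q (inv_injective this)))

/-- The weights solve `t (j + 1) = -q ^ j * t j`, which is `cocycle q ∘ quotA q = 0`. -/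
def cocycle (q : K) : (ℕ →₀ K) →ₗ[K] K :=
  linearCombination K fun j ↦ ∏ i ∈ Finset.range j, -q ^ i

theorem cocycle_quotA (c : ℕ →₀ K) : cocycle q (quotA q c) = 0 := by
  induction c using Finsupp.induction_linear with
  | zero => simp
  | add c d hc hd => simp [hc, hd]
  | single j x =>
    simp only [quotA, cocycle, LinearMap.add_apply, diag_single, shift_single, map_add,
      linearCombination_single, Finset.prod_range_succ, smul_eq_mul]
    ring

theorem cocycle_single_ne_zero (hq0 : q ≠ 0) {j : ℕ} {x : K} (hx : x ≠ 0) :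
    cocycle q (single j x) ≠ 0 := by
  simp [cocycle, hx, Finset.prod_ne_zero_iff, hq0]

variable (q) in
def opA : Module.End K ((ℕ →₀ K) × (ℕ →₀ K)) := (qDeriv q).prodMap (quotA q)

variable (q) in
def opB : Module.End K ((ℕ →₀ K) × (ℕ →₀ K)) :=
  shift.prodMap (quotB q) + LinearMap.inl K _ _ ∘ₗ lsingle 0 ∘ₗ cocycle q ∘ₗ LinearMap.snd K _ _

theorem opA_apply (v : (ℕ →₀ K) × (ℕ →₀ K)) : opA q v = (qDeriv q v.1, quotA q v.2) := rfl

theorem opB_apply (v : (ℕ →₀ K) × (ℕ →₀ K)) :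
    opB q v = (shift v.1 + single 0 (cocycle q v.2), quotB q v.2) := by
  simp [opB]

theorem opA_mul_opB (hq0 : q ≠ 0) (hq1 : q ≠ 1) :
    opA q * opB q = q • (opB q * opA q) + 1 := by
  refine LinearMap.ext fun ⟨s, c⟩ ↦ ?_
  simp [opA_apply, opB_apply, qDeriv_shift, qDeriv_single_zero, cocycle_quotA,
    quotA_quotB hq0 hq1]

theorem opB_ne_smul (hq0 : q ≠ 0) (hq : ¬IsOfFinOrder q) {v : (ℕ →₀ K) × (ℕ →₀ K)}
    (hv : v.2 ≠ 0) (μ : K) : opB q v ≠ μ • v := by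
  obtain ⟨s, c⟩ := v
  intro h
  simp only [opB_apply, Prod.smul_mk, Prod.mk.injEq] at h
  obtain ⟨j, hj⟩ := support_nonempty_iff.2 hv
  rw [eq_single_of_quotB_eq_smul hq0 hq h.2 (mem_support_iff.1 hj)] at h
  exact shift_add_single_ne_smul (cocycle_single_ne_zero hq0 (mem_support_iff.1 hj)) _ _ h.1

variable [Fact (q ≠ 0)] [Fact (q ≠ 1)]

instance : Module (QuantizedWeyl K q) ((ℕ →₀ K) × (ℕ →₀ K)) :=
  Module.compHom _ (lift (opA q) (opB q) (opA_mul_opB Fact.out Fact.out)).toRingHom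

theorem a_smul (v : (ℕ →₀ K) × (ℕ →₀ K)) : a K q • v = opA q v := by
  change lift (opA q) (opB q) _ (a K q) v = _
  rw [lift_a]

theorem b_smul (v : (ℕ →₀ K) × (ℕ →₀ K)) : b K q • v = opB q v := by
  change lift (opA q) (opB q) _ (b K q) v = _
  rw [lift_b]

instance : IsScalarTower K (QuantizedWeyl K q) ((ℕ →₀ K) × (ℕ →₀ K)) where
  smul_assoc c x v := by
    change lift (opA q) (opB q) _ (c • x) v = c • lift (opA q) (opB q) _ x v
    rw [map_smul, LinearMap.smul_apply]

variable (K q) in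
def monolith : Submodule (QuantizedWeyl K q) ((ℕ →₀ K) × (ℕ →₀ K)) :=
  .ofAdjoinEqTop adjoin_a_b (LinearMap.ker (LinearMap.snd K _ _)) <| by
    rintro _ (rfl | rfl) v (hv : v.2 = 0) <;> simp [a_smul, b_smul, opA_apply, opB_apply, hv]

theorem monolith_le_of_single_zero_mem
    {N : Submodule (QuantizedWeyl K q) ((ℕ →₀ K) × (ℕ →₀ K))} (h : (single 0 1, 0) ∈ N) :
    monolith K q ≤ N := by
  have hsingle (i : ℕ) : (single i 1, 0) ∈ N := by
    induction i with
    | zero => exact h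
    | succ i ih => simpa [b_smul, opB_apply] using N.smul_mem (b K q) ih
  rintro ⟨s, c⟩ (rfl : c = 0)
  exact Finsupp.apply_mem_of_forall_single_one_mem (LinearMap.inl K _ _)
    (N := N.restrictScalars K) hsingle s

theorem single_zero_mem_of_mem (hq : ¬IsOfFinOrder q)
    {N : Submodule (QuantizedWeyl K q) ((ℕ →₀ K) × (ℕ →₀ K))} {s : ℕ →₀ K} (hs : s ≠ 0)
    (hsN : (s, 0) ∈ N) : (single 0 1, 0) ∈ N := by
  have of_qDeriv_eq_zero {s : ℕ →₀ K} (hs : s ≠ 0) (hD : qDeriv q s = 0) (hsN : (s, 0) ∈ N) :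
      (single 0 1, 0) ∈ N := by
    rw [eq_single_zero_of_qDeriv_eq_zero hq hD] at hs hsN
    have hs0 : s 0 ≠ 0 := by simpa using hs
    simpa [hs0] using N.smul_of_tower_mem (s 0)⁻¹ hsN
  obtain ⟨n, hn⟩ := s.support.bddAbove
  replace hn (i : ℕ) (hi : n < i) : s i = 0 := notMem_support_iff.1 fun h ↦ hi.not_ge (hn h)
  induction n generalizing s with
  | zero => exact of_qDeriv_eq_zero hs (by ext i; simp [hn (i + 1) i.succ_pos]) hsN
  | succ n ih =>
    by_cases hD : qDeriv q s = 0
    · exact of_qDeriv_eq_zero hs hD hsN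
    · refine ih hD (by simpa [a_smul, opA_apply] using N.smul_mem (a K q) hsN) fun i hi ↦ ?_
      simp [hn (i + 1) (by omega)]

theorem isSimpleModule_monolith (hq : ¬IsOfFinOrder q) :
    IsSimpleModule (QuantizedWeyl K q) (monolith K q) := by
  rw [isSimpleModule_iff_isAtom]
  refine ⟨(Submodule.ne_bot_iff _).2 ⟨(single 0 1, 0), rfl, by simp⟩, fun N hN ↦ ?_⟩
  by_contra hN0
  obtain ⟨⟨s, c⟩, hvN, hv⟩ := (Submodule.ne_bot_iff N).1 hN0
  obtain rfl : c = 0 := hN.le hvN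
  exact hN.not_ge (monolith_le_of_single_zero_mem
    (single_zero_mem_of_mem hq (by simpa using hv) hvN))

theorem monolith_essential (hq : ¬IsOfFinOrder q)
    {N : Submodule (QuantizedWeyl K q) ((ℕ →₀ K) × (ℕ →₀ K))} (hN : N ≠ ⊥) :
    N ⊓ monolith K q ≠ ⊥ := by
  obtain ⟨v, hvN, hv⟩ := (Submodule.ne_bot_iff N).1 hN
  induction hn : v.2.support.card using Nat.strong_induction_on generalizing v with
  | _ n ih =>
  by_cases hv2 : v.2 = 0
  · exact (Submodule.ne_bot_iff _).2 ⟨v, ⟨hvN, hv2⟩, hv⟩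
  obtain ⟨j, hj⟩ := support_nonempty_iff.2 hv2
  set μ : K := ((1 - q) * q ^ j)⁻¹
  have hsupp : (b K q • v - μ • v).2.support ⊆ v.2.support.erase j := by
    intro i hi
    have hi' : (((1 - q) * q ^ i)⁻¹ - μ) * v.2 i ≠ 0 := by
      simpa [b_smul, opB_apply, quotB, sub_mul] using mem_support_iff.1 hi
    refine Finset.mem_erase.2 ⟨?_, mem_support_iff.2 (right_ne_zero_of_mul hi')⟩
    rintro rfl
    simp [μ] at hi'
  refine ih _ (hn ▸ (Finset.card_le_card hsupp).trans_lt (Finset.card_erase_lt_of_mem hj))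
    (b K q • v - μ • v) (N.sub_mem (N.smul_mem _ hvN) (N.smul_of_tower_mem μ hvN)) ?_ rfl
  rw [sub_ne_zero, b_smul]
  exact opB_ne_smul Fact.out hq hv2 μ

variable (q) in
def tail (k : ℕ) : Submodule (QuantizedWeyl K q) ((ℕ →₀ K) × (ℕ →₀ K)) :=
  .ofAdjoinEqTop adjoin_a_b ((supported K K (Set.Ici k)).comap (LinearMap.snd K _ _)) <| by
    simp only [Submodule.mem_comap, mem_supported', Set.mem_Ici, not_le, LinearMap.snd_apply]
    rintro _ (rfl | rfl) v hv j hj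
    · rcases j with _ | j
      · simp [a_smul, opA_apply, quotA, hv 0 hj]
      · simp [a_smul, opA_apply, quotA, hv _ hj, hv j (by omega)]
    · simp [b_smul, opB_apply, quotB, hv _ hj]

theorem mem_tail {k : ℕ} {v : (ℕ →₀ K) × (ℕ →₀ K)} : v ∈ tail q k ↔ ∀ j < k, v.2 j = 0 := by
  simp [tail, mem_supported']

theorem strictAnti_tail : StrictAnti (tail (K := K) q) := by
  refine strictAnti_nat_of_succ_lt fun k ↦ lt_of_le_of_ne (fun v hv ↦ ?_) fun h ↦ ?_
  · exact mem_tail.2 fun j hj ↦ mem_tail.1 hv j (by omega)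
  · have : ((0 : ℕ →₀ K), single k (1 : K)) ∈ tail q k :=
      mem_tail.2 fun j hj ↦ by simp [hj.ne']
    rw [← h, mem_tail] at this
    simpa using this k k.lt_succ_self

theorem not_isArtinian : ¬IsArtinian (QuantizedWeyl K q) ((ℕ →₀ K) × (ℕ →₀ K)) :=
  fun _ ↦ not_strictAnti_of_wellFoundedLT (tail q) strictAnti_tail

theorem span_single_eq_top :
    Submodule.span (QuantizedWeyl K q) {((0 : ℕ →₀ K), single 0 (1 : K))} = ⊤ := by
  set N := Submodule.span (QuantizedWeyl K q) {((0 : ℕ →₀ K), single 0 (1 : K))}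
  have hf0 : ((0 : ℕ →₀ K), single 0 (1 : K)) ∈ N := Submodule.subset_span rfl
  have hmonolith : monolith K q ≤ N := monolith_le_of_single_zero_mem <| by
    simpa [b_smul, opB_apply, cocycle, quotB] using
      N.sub_mem (N.smul_mem (b K q) hf0) (N.smul_of_tower_mem (1 - q)⁻¹ hf0)
  have hsnd (j : ℕ) : ((0 : ℕ →₀ K), single j (1 : K)) ∈ N := by
    induction j with
    | zero => exact hf0
    | succ j ih =>
      simpa [a_smul, opA_apply, quotA] using
        N.sub_mem (N.smul_mem (a K q) ih) (N.smul_of_tower_mem (q ^ j) ih)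
  refine eq_top_iff.2 fun ⟨s, c⟩ _ ↦ ?_
  rw [show (s, c) = (s, 0) + (0, c) by simp]
  exact N.add_mem (hmonolith rfl) <| Finsupp.apply_mem_of_forall_single_one_mem
    (LinearMap.inr K _ _) (N := N.restrictScalars K) hsnd c

instance : Module.Finite (QuantizedWeyl K q) ((ℕ →₀ K) × (ℕ →₀ K)) :=
  ⟨⟨{((0 : ℕ →₀ K), single 0 1)}, by rw [Finset.coe_singleton, span_single_eq_top]⟩⟩

end QuantizedWeyl

theorem quantizedWeyl_not_diamond (K : Type) [Field K] (q : K) (hq0 : q ≠ 0)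
    (hq : ∀ k : ℕ, 0 < k → q ^ k ≠ 1) :
    Nonempty (FGMonolithicNonArtinianModule (QuantizedWeyl K q)) := by
  have hq' : ¬IsOfFinOrder q := by simpa [isOfFinOrder_iff_pow_eq_one] using hq
  have : Fact (q ≠ 0) := ⟨hq0⟩
  have : Fact (q ≠ 1) := ⟨fun h ↦ hq' (h ▸ IsOfFinOrder.one)⟩
  exact ⟨{ M := (ℕ →₀ K) × (ℕ →₀ K)
           fg := inferInstance
           monolith := QuantizedWeyl.monolith K q
           monolith_simple := QuantizedWeyl.isSimpleModule_monolith hq'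
           monolith_essential := fun _ ↦ QuantizedWeyl.monolith_essential hq'
           not_artinian := QuantizedWeyl.not_isArtinian }⟩

end
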